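/- arXiv:1305.7405 — 4 statements merged into one kernel-verified Lean document; each statement's English description precedes it below -/
import Mathlib

section
/- For every real m ≥ 1 there exists a constant c > 0 such that for all x ≥ 0: (1 - x^m)² ≥ c · ( x^{m+1} - (m+1)·x + m ). -/
/-!
With `a = x ^ m`, the defect `m (1 - a)² - (x ^ (m + 1) - (m + 1) x + m)` equals
`m (a - 1) (a - x) + (x + (m - 1) x ^ (m + 1) - m a)`. For `m ≥ 1` both `a - 1` and `a - x`
have the sign of `x - 1`, so the first term is nonnegative, and the second is nonnegative by
weighted AM–GM. Hence `c = 1 / m` works.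
-/

open Real

/-- Weighted AM–GM of `x` and `x ^ (m + 1)` with weights `1 / m` and `(m - 1) / m`. -/
lemma mul_rpow_le_add_mul_rpow_add_one {x m : ℝ} (hx : 0 ≤ x) (hm : 1 ≤ m) :
    m * x ^ m ≤ x + (m - 1) * x ^ (m + 1) := by
  have hm0 : 0 < m := by linarith
  have hgm := geom_mean_le_arith_mean2_weighted (w₁ := 1 / m) (w₂ := (m - 1) / m) (p₁ := x) (p₂ := x ^ (m + 1))
    (one_div_nonneg.mpr hm0.le) (div_nonneg (by linarith) hm0.le) hx (rpow_nonneg hx _)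
    (by field_simp; ring)
  have hexp : 1 / m + (m + 1) * ((m - 1) / m) = m := by field_simp; ring
  rw [← rpow_mul hx, ← rpow_add' hx (by rw [hexp]; exact hm0.ne'), hexp] at hgm
  calc m * x ^ m ≤ m * (1 / m * x + (m - 1) / m * x ^ (m + 1)) := by gcongr
    _ = x + (m - 1) * x ^ (m + 1) := by field_simp

lemma rpow_sub_one_mul_rpow_sub_self_nonneg {x m : ℝ} (hx : 0 ≤ x) (hm : 1 ≤ m) :
    0 ≤ (x ^ m - 1) * (x ^ m - x) := by
  rcases le_total x 1 with hx1 | hx1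
  · have h1 : x ^ m ≤ 1 := rpow_le_one hx hx1 (by linarith)
    have h2 : x ^ m ≤ x := by
      simpa using rpow_le_rpow_of_exponent_ge' hx hx1 zero_le_one hm
    exact mul_nonneg_of_nonpos_of_nonpos (by linarith) (by linarith)
  · have h1 : 1 ≤ x ^ m := one_le_rpow hx1 (by linarith)
    have h2 : x ≤ x ^ m := by simpa using rpow_le_rpow_of_exponent_le hx1 hm
    exact mul_nonneg (by linarith) (by linarith)

lemma rpow_add_one_sub_mul_add_le_mul_one_sub_rpow_sq {x m : ℝ} (hx : 0 ≤ x) (hm : 1 ≤ m) :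
    x ^ (m + 1) - (m + 1) * x + m ≤ m * (1 - x ^ m) ^ 2 := by
  have hsides := mul_nonneg (by linarith : (0 : ℝ) ≤ m) (rpow_sub_one_mul_rpow_sub_self_nonneg hx hm)
  have hamgm := mul_rpow_le_add_mul_rpow_add_one hx hm
  rw [rpow_add_one' hx (by linarith)] at hamgm ⊢
  linarith

theorem stmt_4 (m : ℝ) (hm : 1 ≤ m) :
    ∃ c : ℝ, 0 < c ∧ ∀ x : ℝ, 0 ≤ x →
      c * (x ^ (m + 1) - (m + 1) * x + m) ≤ (1 - x ^ m) ^ 2 := by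
  have hm0 : 0 < m := by linarith
  refine ⟨1 / m, by positivity, fun x hx => ?_⟩
  rw [one_div, inv_mul_le_iff₀ hm0]
  exact rpow_add_one_sub_mul_add_le_mul_one_sub_rpow_sq hx hm
end

section
/- For every real m ≥ 1 and every compact set K ⊆ (0,∞) there exists a constant C_K > 0 such that for all y ≥ 0 and all y_∞ ∈ K: (y^m - y_∞^m)² ≥ C_K · ( (y^{m+1} - y_∞^{m+1})/(m+1) - (y - y_∞)·y_∞^m ). -/
/-- Tangent line inequality for rpow: for `0 ≤ x`, `0 < z`, `1 ≤ p`,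
`z ^ p + p * z ^ (p - 1) * (x - z) ≤ x ^ p`. -/
lemma tangent_rpow {p x z : ℝ} (hp : 1 ≤ p) (hx : 0 ≤ x) (hz : 0 < z) :
    z ^ p + p * z ^ (p - 1) * (x - z) ≤ x ^ p := by
  have hs : -1 ≤ x / z - 1 := by
    have : 0 ≤ x / z := div_nonneg hx hz.le
    linarith
  have hB := one_add_mul_self_le_rpow_one_add hs hp
  have h1 : (1 : ℝ) + (x / z - 1) = x / z := by ring
  rw [h1] at hB
  have hzp : (0 : ℝ) < z ^ p := Real.rpow_pos_of_pos hz p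
  have hdiv : (x / z) ^ p = x ^ p / z ^ p := Real.div_rpow hx hz.le p
  rw [hdiv] at hB
  have hB' : (1 + p * (x / z - 1)) * z ^ p ≤ x ^ p := by
    have := mul_le_mul_of_nonneg_right hB hzp.le
    rwa [div_mul_cancel₀ _ hzp.ne'] at this
  have hz1 : z ^ (p - 1) * z = z ^ p := by
    have h := Real.rpow_add hz (p - 1) 1
    rw [Real.rpow_one] at h
    rw [← h]; norm_num
  have hkey : (1 + p * (x / z - 1)) * z ^ p
      = z ^ p + p * z ^ (p - 1) * (x - z) := by
    have : x / z * z ^ p = x * z ^ (p - 1) := by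
      rw [← hz1]; field_simp
    nlinarith [this]
  linarith [hkey ▸ hB']

theorem stmt_5 (m : ℝ) (hm : 1 ≤ m) (K : Set ℝ) (hK : IsCompact K)
    (hKpos : K ⊆ Set.Ioi (0:ℝ)) :
    ∃ C : ℝ, 0 < C ∧ ∀ y : ℝ, 0 ≤ y → ∀ yinf ∈ K,
      C * ((y ^ (m + 1) - yinf ^ (m + 1)) / (m + 1) - (y - yinf) * yinf ^ m)
        ≤ (y ^ m - yinf ^ m) ^ 2 := by
  rcases K.eq_empty_or_nonempty with hKe | hKne
  · exact ⟨1, one_pos, fun y _ yinf hyinf => by simp [hKe] at hyinf⟩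
  obtain ⟨a, haK, hamin⟩ := hK.exists_isLeast hKne
  have ha0 : 0 < a := hKpos haK
  refine ⟨a ^ (m - 1), Real.rpow_pos_of_pos ha0 _, ?_⟩
  intro y hy yinf hyinf
  set C := a ^ (m - 1) with hC
  have hC0 : 0 < C := Real.rpow_pos_of_pos ha0 _
  have hyinf0 : 0 < yinf := hKpos hyinf
  have haY : a ≤ yinf := hamin hyinf
  have hm1 : (0:ℝ) < m + 1 := by linarith
  have hm1' : (1:ℝ) ≤ m + 1 := by linarith
  -- tangent at y for exponent m+1
  have hyM : y ^ (m + 1 - 1) = y ^ m := by norm_num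
  have step1 : (y ^ (m + 1) - yinf ^ (m + 1)) / (m + 1) ≤ y ^ m * (y - yinf) := by
    rcases eq_or_lt_of_le hy with hy0 | hy0
    · have hm0 : m ≠ 0 := by linarith
      have hm10 : m + 1 ≠ 0 := by linarith
      rw [← hy0, Real.zero_rpow hm0, Real.zero_rpow hm10]
      have : (0:ℝ) ≤ yinf ^ (m+1) := (Real.rpow_pos_of_pos hyinf0 _).le
      rw [zero_mul, div_le_iff₀ hm1]
      linarith
    · have := tangent_rpow hm1' hyinf0.le hy0
      rw [hyM] at this
      rw [div_le_iff₀ hm1]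
      nlinarith [this]
  -- F ≤ D * d
  have step2 : (y ^ (m + 1) - yinf ^ (m + 1)) / (m + 1) - (y - yinf) * yinf ^ m
      ≤ (y ^ m - yinf ^ m) * (y - yinf) := by nlinarith [step1]
  -- the m-1 comparison
  have hCc : C ≤ yinf ^ (m - 1) :=
    Real.rpow_le_rpow ha0.le haY (by linarith)
  have hym_split : y ^ m = y ^ (m - 1) * y := by
    rcases eq_or_lt_of_le hy with hy0 | hy0
    · rw [← hy0, Real.zero_rpow (by linarith : m ≠ 0), mul_zero]
    · have h := Real.rpow_add hy0 (m - 1) 1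
      rw [Real.rpow_one] at h
      rw [← h]; norm_num
  have hyinfm_split : yinf ^ m = yinf ^ (m - 1) * yinf := by
    have h := Real.rpow_add hyinf0 (m - 1) 1
    rw [Real.rpow_one] at h
    rw [← h]; norm_num
  set D := y ^ m - yinf ^ m with hD
  set d := y - yinf with hd
  have step3 : C * (D * d) ≤ D ^ 2 := by
    rcases le_total yinf y with hyy | hyy
    · -- d ≥ 0 : D ≥ yinf^(m-1) * d ≥ C * d ≥ 0
      have hd0 : 0 ≤ d := by simp [hd]; linarith
      have h1 : yinf ^ (m - 1) ≤ y ^ (m - 1) :=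
        Real.rpow_le_rpow hyinf0.le hyy (by linarith)
      have h2 : yinf ^ (m - 1) * y ≤ y ^ m := by
        rw [hym_split]; exact mul_le_mul_of_nonneg_right h1 hy
      have hDge : yinf ^ (m - 1) * d ≤ D := by
        rw [hD, hd, hyinfm_split]; nlinarith [h2]
      have hCd : C * d ≤ D := le_trans (mul_le_mul_of_nonneg_right hCc hd0) hDge
      have hD0 : 0 ≤ D := le_trans (mul_nonneg hC0.le hd0) hCd
      nlinarith [hCd, hD0]
    · -- d ≤ 0 : D ≤ yinf^(m-1) * d ≤ C * d ≤ 0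
      have hd0 : d ≤ 0 := by simp [hd]; linarith
      have h1 : y ^ (m - 1) ≤ yinf ^ (m - 1) :=
        Real.rpow_le_rpow hy hyy (by linarith)
      have h2 : y ^ m ≤ yinf ^ (m - 1) * y := by
        rw [hym_split]; exact mul_le_mul_of_nonneg_right h1 hy
      have hDle : D ≤ yinf ^ (m - 1) * d := by
        rw [hD, hd, hyinfm_split]; nlinarith [h2]
      have hCd : D ≤ C * d := by
        refine le_trans hDle ?_
        nlinarith [hCc, hd0]
      have hD0 : D ≤ 0 := le_trans hCd (by nlinarith [hC0.le, hd0])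
      nlinarith [hCd, hD0]
  calc C * ((y ^ (m + 1) - yinf ^ (m + 1)) / (m + 1) - (y - yinf) * yinf ^ m)
      ≤ C * (D * d) := by
        apply mul_le_mul_of_nonneg_left _ hC0.le
        rw [hD, hd]; exact step2
    _ ≤ D ^ 2 := step3
end

section
/- Let X be a finite type, K : X → X → ℝ a nonnegative kernel, and w : X → ℝ a positive weight which is K-stationary, i.e. for every x, ∑_y K y x · w y = ∑_y K x y · w x. Let Φ : ℝ → ℝ be convex and differentiable and h : X → ℝ. Then ∑_{x,y} h x · (Φ'(h y) - Φ'(h x)) · K x y · w x = - ∑_{x,y} [ (h y - h x)·Φ'(h y) + Φ(h x) - Φ(h y) ] · K x y · w x, and this quantity is ≤ 0. -/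
lemma support_line {Φ : ℝ → ℝ} (hΦconv : ConvexOn ℝ Set.univ Φ)
    (hΦdiff : Differentiable ℝ Φ) (a b : ℝ) :
    Φ b + deriv Φ b * (a - b) ≤ Φ a := by
  rcases lt_trichotomy a b with hab | hab | hab
  · have := hΦconv.slope_le_deriv (Set.mem_univ a) (Set.mem_univ b) hab (hΦdiff b)
    rw [slope_def_field] at this
    have hb : 0 < b - a := by linarith
    rw [div_le_iff₀ hb] at this
    nlinarith
  · simp [hab]
  · have := hΦconv.deriv_le_slope (Set.mem_univ b) (Set.mem_univ a) hab (hΦdiff b)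
    rw [slope_def_field] at this
    have hb : 0 < a - b := by linarith
    rw [le_div_iff₀ hb] at this
    nlinarith

theorem stmt_11 (X : Type*) [Fintype X] (K : X → X → ℝ) (w : X → ℝ)
    (hK : ∀ x y, 0 ≤ K x y) (hw : ∀ x, 0 < w x)
    (hstat : ∀ x, (∑ y, K y x * w y) = ∑ y, K x y * w x)
    (Φ : ℝ → ℝ) (hΦconv : ConvexOn ℝ Set.univ Φ) (hΦdiff : Differentiable ℝ Φ)
    (h : X → ℝ) :
    (∑ x, ∑ y, h x * (deriv Φ (h y) - deriv Φ (h x)) * K x y * w x) =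
      -∑ x, ∑ y, ((h y - h x) * deriv Φ (h y) + Φ (h x) - Φ (h y)) * K x y * w x ∧
    (∑ x, ∑ y, h x * (deriv Φ (h y) - deriv Φ (h x)) * K x y * w x) ≤ 0 := by
  set D := deriv Φ with hD
  -- key swap identity
  have key : ∀ g : X → ℝ, (∑ x, ∑ y, g x * (K x y * w x)) = ∑ x, ∑ y, g y * (K x y * w x) := by
    intro g
    have h1 : ∀ x : X, (∑ y, g x * (K x y * w x)) = ∑ y, g x * (K y x * w y) := by
      intro x
      rw [← Finset.mul_sum, ← Finset.mul_sum, hstat]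
    calc (∑ x, ∑ y, g x * (K x y * w x)) = ∑ x, ∑ y, g x * (K y x * w y) := by
            exact Finset.sum_congr rfl fun x _ => h1 x
      _ = ∑ y, ∑ x, g x * (K y x * w y) := Finset.sum_comm
  set S1 := ∑ x, ∑ y, h x * D (h y) * (K x y * w x) with hS1
  set S2 := ∑ x, ∑ y, h x * D (h x) * (K x y * w x) with hS2
  set S3 := ∑ x, ∑ y, h y * D (h y) * (K x y * w x) with hS3
  set S4 := ∑ x, ∑ y, Φ (h x) * (K x y * w x) with hS4
  set S5 := ∑ x, ∑ y, Φ (h y) * (K x y * w x) with hS5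
  have e23 : S2 = S3 := key (fun x => h x * D (h x))
  have e45 : S4 = S5 := key (fun x => Φ (h x))
  have hL : (∑ x, ∑ y, h x * (D (h y) - D (h x)) * K x y * w x) = S1 - S2 := by
    rw [hS1, hS2, ← Finset.sum_sub_distrib]
    refine Finset.sum_congr rfl fun x _ => ?_
    rw [← Finset.sum_sub_distrib]
    exact Finset.sum_congr rfl fun y _ => by ring
  have hR : (∑ x, ∑ y, ((h y - h x) * D (h y) + Φ (h x) - Φ (h y)) * K x y * w x)
      = (S3 - S1) + (S4 - S5) := by
    rw [hS1, hS3, hS4, hS5, ← Finset.sum_sub_distrib, ← Finset.sum_sub_distrib,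
      ← Finset.sum_add_distrib]
    refine Finset.sum_congr rfl fun x _ => ?_
    rw [← Finset.sum_sub_distrib, ← Finset.sum_sub_distrib, ← Finset.sum_add_distrib]
    exact Finset.sum_congr rfl fun y _ => by ring
  have heq : (∑ x, ∑ y, h x * (D (h y) - D (h x)) * K x y * w x) =
      -∑ x, ∑ y, ((h y - h x) * D (h y) + Φ (h x) - Φ (h y)) * K x y * w x := by
    rw [hL, hR]; linarith
  refine ⟨heq, ?_⟩
  rw [heq, neg_nonpos]
  refine Finset.sum_nonneg fun x _ => Finset.sum_nonneg fun y _ => ?_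
  have hsupp := support_line hΦconv hΦdiff (h x) (h y)
  have ht : 0 ≤ (h y - h x) * D (h y) + Φ (h x) - Φ (h y) := by
    rw [hD]; nlinarith [hsupp]
  exact mul_nonneg (mul_nonneg ht (hK x y)) (hw x).le
end

section
/- Let σ : ℝ × ℝ → ℝ × ℝ with components σ¹, σ² positive and C¹ on (0,∞)², satisfying the compatibility relation ∂₂(log σ¹) = ∂₁(log σ²) on (0,∞)². Fix f_∞ = (f_∞¹, f_∞²) in (0,∞)² and define G(f¹, f²) = ∫_{f_∞¹}^{f¹} log(σ¹(s, f²)/σ¹(f_∞)) ds + ∫_{f_∞²}^{f²} log(σ²(f_∞¹, s)/σ²(f_∞)) ds. Then ∂G/∂f¹(f¹,f²) = log(σ¹(f¹,f²)/σ¹(f_∞)) and ∂G/∂f²(f¹,f²) = log(σ²(f¹,f²)/σ²(f_∞)) for all (f¹,f²) ∈ (0,∞)². -/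
/-!
The `f¹`-derivative is the fundamental theorem of calculus. For the `f²`-derivative, the first
integral is differentiated under the integral sign, giving `∫_{f_∞¹}^{f¹} ∂₂ log σ¹(s, f²) ds`.
The compatibility relation turns the integrand into `∂₁ log σ²(s, f²)`, so the integral equals
`log σ²(f¹, f²) - log σ²(f_∞¹, f²)`; the derivative of the second integral,
`log (σ²(f_∞¹, f²) / σ²(f_∞))`, supplies the missing term.
-/

open Set MeasureTheory Metric

theorem uIcc_subset_Ioi {α : Type*} [LinearOrder α] {a b c : α} (ha : c < a) (hb : c < b) :
    uIcc a b ⊆ Ioi c :=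
  fun _ ht => (lt_inf_iff.2 ⟨ha, hb⟩).trans_le ht.1

theorem hasDerivAt_partial_fst {g : ℝ × ℝ → ℝ} {x y : ℝ} (hg : DifferentiableAt ℝ g (x, y)) :
    HasDerivAt (fun s => g (s, y)) (fderiv ℝ g (x, y) (1, 0)) x :=
  hg.hasFDerivAt.comp_hasDerivAt x ((hasDerivAt_id x).prodMk (hasDerivAt_const x y))

theorem hasDerivAt_partial_snd {g : ℝ × ℝ → ℝ} {x y : ℝ} (hg : DifferentiableAt ℝ g (x, y)) :
    HasDerivAt (fun t => g (x, t)) (fderiv ℝ g (x, y) (0, 1)) y :=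
  hg.hasFDerivAt.comp_hasDerivAt y ((hasDerivAt_const y x).prodMk (hasDerivAt_id y))

theorem hasDerivAt_integral_right_of_continuousOn {f : ℝ → ℝ} {s : Set ℝ} (hs : IsOpen s)
    (hf : ContinuousOn f s) {a b : ℝ} (hab : uIcc a b ⊆ s) :
    HasDerivAt (fun u => ∫ t in a..u, f t) (f b) b :=
  have hb : s ∈ nhds b := hs.mem_nhds (hab right_mem_uIcc)
  intervalIntegral.integral_hasDerivAt_right (hf.mono hab).intervalIntegrable
    ⟨s, hb, hf.aestronglyMeasurable hs.measurableSet⟩ (hf.continuousAt hb)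

theorem deriv_log_div_const {f : ℝ → ℝ} {x c : ℝ} (hf : DifferentiableAt ℝ f x) (hfx : f x ≠ 0)
    (hc : c ≠ 0) : deriv (fun y => Real.log (f y / c)) x = deriv (fun y => Real.log (f y)) x := by
  rw [((hf.hasDerivAt.div_const c).log (div_ne_zero hfx hc)).deriv, (hf.hasDerivAt.log hfx).deriv]
  field_simp

theorem hasDerivAt_intervalIntegral_of_contDiffOn {g : ℝ × ℝ → ℝ} {U : Set (ℝ × ℝ)}
    (hU : IsOpen U) (hg : ContDiffOn ℝ 1 g U) {a b y : ℝ} (hy : ∀ t ∈ uIcc a b, (t, y) ∈ U) :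
    HasDerivAt (fun v => ∫ t in a..b, g (t, v)) (∫ t in a..b, fderiv ℝ g (t, y) (0, 1)) y := by
  -- The derivative is dominated by its maximum on a compact tube `uIcc a b ×ˢ closedBall y δ ⊆ U`.
  obtain ⟨δ, hδ, hδU⟩ := (isCompact_uIcc.prod isCompact_singleton).exists_cthickening_subset_open
    hU (by rintro ⟨t, _⟩ ⟨ht, rfl⟩; exact hy t ht)
  have hK : uIcc a b ×ˢ closedBall y δ ⊆ U := fun p ⟨ht, hp⟩ =>
    hδU (mem_cthickening_of_dist_le p (p.1, y) δ _ ⟨ht, rfl⟩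
      (by simpa [Prod.dist_eq] using hp))
  have hmem : ∀ t ∈ uIoc a b, ∀ x ∈ ball y δ, (t, x) ∈ U := fun t ht x hx =>
    hK ⟨Ioc_subset_Icc_self ht, ball_subset_closedBall hx⟩
  have hg' : ContinuousOn (fun p => fderiv ℝ g p (0, 1)) U :=
    (hg.continuousOn_fderiv_of_isOpen hU le_rfl).clm_apply continuousOn_const
  obtain ⟨M, hM⟩ := (isCompact_uIcc.prod (isCompact_closedBall y δ)).exists_bound_of_continuousOn
    (hg'.mono hK)
  refine (intervalIntegral.hasDerivAt_integral_of_dominated_loc_of_deriv_le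
    (F := fun x t => g (t, x)) (F' := fun x t => fderiv ℝ g (t, x) (0, 1)) (bound := fun _ => M)
    (ball_mem_nhds y hδ) ?_ ?_ ?_ ?_ intervalIntegrable_const ?_).2
  · filter_upwards [ball_mem_nhds y hδ] with x hx
    exact (hg.continuousOn.comp (by fun_prop) fun t ht => hmem t ht x hx).aestronglyMeasurable
      measurableSet_uIoc
  · exact (hg.continuousOn.comp (by fun_prop) hy).intervalIntegrable
  · exact (hg'.comp (by fun_prop) fun t ht => hmem t ht y (mem_ball_self hδ)).aestronglyMeasurable
      measurableSet_uIoc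
  · exact .of_forall fun t ht x hx => hM _ ⟨Ioc_subset_Icc_self ht, ball_subset_closedBall hx⟩
  · exact .of_forall fun t ht x hx => hasDerivAt_partial_snd
      ((hg.contDiffAt (hU.mem_nhds (hmem t ht x hx))).differentiableAt one_ne_zero)

theorem hasDerivAt_log_div_of_compat {σ1 σ2 : ℝ × ℝ → ℝ} {U : Set (ℝ × ℝ)} (hU : IsOpen U)
    (hσ1 : ContDiffOn ℝ 1 σ1 U) (hσ2 : ContDiffOn ℝ 1 σ2 U)
    (hσ1ne : ∀ p ∈ U, σ1 p ≠ 0) (hσ2ne : ∀ p ∈ U, σ2 p ≠ 0)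
    (hcompat : ∀ x y : ℝ, (x, y) ∈ U →
      deriv (fun t => Real.log (σ1 (x, t))) y = deriv (fun t => Real.log (σ2 (t, y))) x)
    {c1 c2 : ℝ} (hc1 : c1 ≠ 0) (hc2 : c2 ≠ 0) {x y : ℝ} (hxy : (x, y) ∈ U) :
    HasDerivAt (fun s => Real.log (σ2 (s, y) / c2))
      (fderiv ℝ (fun p => Real.log (σ1 p / c1)) (x, y) (0, 1)) x := by
  have hd1 : DifferentiableAt ℝ σ1 (x, y) :=
    (hσ1.contDiffAt (hU.mem_nhds hxy)).differentiableAt one_ne_zero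
  have hd2 : DifferentiableAt ℝ σ2 (x, y) :=
    (hσ2.contDiffAt (hU.mem_nhds hxy)).differentiableAt one_ne_zero
  have hsec1 := (hasDerivAt_partial_snd hd1).differentiableAt
  have hsec2 := (hasDerivAt_partial_fst hd2).differentiableAt
  have hg1 : DifferentiableAt ℝ (fun p => Real.log (σ1 p / c1)) (x, y) :=
    (((hσ1.div_const c1).log fun p hp => div_ne_zero (hσ1ne p hp) hc1).contDiffAt
      (hU.mem_nhds hxy)).differentiableAt one_ne_zero
  rw [← (hasDerivAt_partial_snd hg1).deriv,
    deriv_log_div_const hsec1 (hσ1ne _ hxy) hc1, hcompat x y hxy,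
    ← deriv_log_div_const hsec2 (hσ2ne _ hxy) hc2]
  exact ((hsec2.div_const c2).log (div_ne_zero (hσ2ne _ hxy) hc2)).hasDerivAt

theorem stmt_13 (σ1 σ2 : ℝ × ℝ → ℝ)
    (hσ1 : ContDiffOn ℝ 1 σ1 (Set.Ioi (0:ℝ) ×ˢ Set.Ioi (0:ℝ)))
    (hσ2 : ContDiffOn ℝ 1 σ2 (Set.Ioi (0:ℝ) ×ˢ Set.Ioi (0:ℝ)))
    (hσ1pos : ∀ p ∈ Set.Ioi (0:ℝ) ×ˢ Set.Ioi (0:ℝ), 0 < σ1 p)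
    (hσ2pos : ∀ p ∈ Set.Ioi (0:ℝ) ×ˢ Set.Ioi (0:ℝ), 0 < σ2 p)
    (hcompat : ∀ x y : ℝ, 0 < x → 0 < y →
      deriv (fun t => Real.log (σ1 (x, t))) y = deriv (fun t => Real.log (σ2 (t, y))) x)
    (a b : ℝ) (ha : 0 < a) (hb : 0 < b) :
    ∀ f1 f2 : ℝ, 0 < f1 → 0 < f2 →
      HasDerivAt (fun u : ℝ =>
          (∫ s in a..u, Real.log (σ1 (s, f2) / σ1 (a, b))) +
            ∫ s in b..f2, Real.log (σ2 (a, s) / σ2 (a, b)))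
        (Real.log (σ1 (f1, f2) / σ1 (a, b))) f1 ∧
      HasDerivAt (fun v : ℝ =>
          (∫ s in a..f1, Real.log (σ1 (s, v) / σ1 (a, b))) +
            ∫ s in b..v, Real.log (σ2 (a, s) / σ2 (a, b)))
        (Real.log (σ2 (f1, f2) / σ2 (a, b))) f2 := by
  intro f1 f2 hf1 hf2
  have hU : IsOpen (Ioi (0:ℝ) ×ˢ Ioi (0:ℝ)) := isOpen_Ioi.prod isOpen_Ioi
  have hσ1ne : ∀ p ∈ Ioi (0:ℝ) ×ˢ Ioi (0:ℝ), σ1 p ≠ 0 := fun p hp => (hσ1pos p hp).ne'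
  have hσ2ne : ∀ p ∈ Ioi (0:ℝ) ×ˢ Ioi (0:ℝ), σ2 p ≠ 0 := fun p hp => (hσ2pos p hp).ne'
  have hc1 := hσ1ne (a, b) ⟨ha, hb⟩
  have hc2 := hσ2ne (a, b) ⟨ha, hb⟩
  have hg1 : ContDiffOn ℝ 1 (fun p => Real.log (σ1 p / σ1 (a, b))) (Ioi 0 ×ˢ Ioi 0) :=
    (hσ1.div_const _).log fun p hp => div_ne_zero (hσ1ne p hp) hc1
  have hg2 : ContDiffOn ℝ 1 (fun p => Real.log (σ2 p / σ2 (a, b))) (Ioi 0 ×ˢ Ioi 0) :=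
    (hσ2.div_const _).log fun p hp => div_ne_zero (hσ2ne p hp) hc2
  have hseg1 := uIcc_subset_Ioi ha hf1
  constructor
  · exact (hasDerivAt_integral_right_of_continuousOn isOpen_Ioi
      (hg1.continuousOn.comp (f := fun s => (s, f2)) (by fun_prop) fun s hs => ⟨hs, hf2⟩)
      hseg1).add_const _
  · have hI1 := hasDerivAt_intervalIntegral_of_contDiffOn hU hg1 fun t ht => ⟨hseg1 ht, hf2⟩
    have hI2 := hasDerivAt_integral_right_of_continuousOn isOpen_Ioi
      (hg2.continuousOn.comp (f := fun s => (a, s)) (by fun_prop) fun s hs => ⟨ha, hs⟩)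
      (uIcc_subset_Ioi hb hf2)
    have hFTC := intervalIntegral.integral_eq_sub_of_hasDerivAt
      (fun t ht => hasDerivAt_log_div_of_compat hU hσ1 hσ2 hσ1ne hσ2ne
        (fun x y hxy => hcompat x y hxy.1 hxy.2) hc1 hc2 ⟨hseg1 ht, hf2⟩)
      (((hg1.continuousOn_fderiv_of_isOpen hU le_rfl).clm_apply continuousOn_const).comp
        (f := fun t => (t, f2)) (by fun_prop) fun t ht => ⟨hseg1 ht, hf2⟩).intervalIntegrable
    exact (hI1.add hI2).congr_deriv (by rw [hFTC]; simp)
end
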